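/- Let R be a Bézout domain. Then every finitely generated projective R-module is free, the Picard group of R is trivial, and consequently for the standard Borel subgroup B of upper triangular matrices in GL_m, the natural map GL_m(R)/B(R) → (GL_m/B)(R) (to R-points of the flag variety) is bijective. -/

import Mathlib

/-!
Over a Bézout domain finitely generated ideals are principal, hence free. Splitting off the last
coordinate of a finitely generated submodule of `Rⁿ` and inducting on `n` shows that such
submodules, and so finitely generated projective modules, are free.

In a flag of direct summands of `Rᵐ`, the complement of `F i` in `F (i + 1)` is again a direct
summand of `Rᵐ`, hence free, and of rank one by additivity of rank. Generators of these
complements are the columns of an invertible matrix with the given flag. Two invertible matrices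
`g`, `g'` have the same flag iff `g⁻¹ * g'` preserves the standard flag, i.e. is upper triangular.
-/

open Matrix
open scoped MatrixGroups

/-- The flag of column spans of an invertible matrix: `colSpan g i` is the span of the
first `i` columns of `g`. -/
def colSpan (R : Type) [CommRing R] (m : ℕ) (g : GL (Fin m) R) (i : Fin (m + 1)) :
    Submodule R (Fin m → R) :=
  Submodule.span R
    ((fun j k => ((g : Matrix (Fin m) (Fin m) R) k j)) '' {j : Fin m | (j : ℕ) < (i : ℕ)})

open Module

section

open LinearMap

theorem Ideal.free_of_isPrincipal {R : Type*} [CommRing R] [IsDomain R] (I : Ideal R)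
    [I.IsPrincipal] : Module.Free R I := by
  obtain ⟨a, rfl⟩ := Submodule.IsPrincipal.principal I
  rcases eq_or_ne a 0 with rfl | ha
  · rw [Submodule.span_singleton_eq_bot.mpr rfl]
    infer_instance
  · exact .of_equiv (LinearEquiv.toSpanNonzeroSingleton R R a ha)

theorem LinearMap.nonempty_linearEquiv_ker_prod {R M P : Type*} [Ring R] [AddCommGroup M]
    [Module R M] [AddCommGroup P] [Module R P] [Module.Projective R P] (f : M →ₗ[R] P)
    (hf : Function.Surjective f) : Nonempty (M ≃ₗ[R] ker f × P) := by
  obtain ⟨l, hl⟩ := f.exists_rightInverse_of_surjective (range_eq_top.mpr hf)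
  exact ⟨((exact_subtype_ker_map f).splitSurjectiveEquiv (ker f).injective_subtype
    ⟨l, hl⟩).1⟩

namespace IsBezout

variable {R : Type*} [CommRing R] [IsDomain R] [IsBezout R]

theorem free_of_injective_pi {n : ℕ} {M : Type*} [AddCommGroup M] [Module R M]
    [Module.Finite R M] (f : M →ₗ[R] Fin n → R) (hf : Function.Injective f) :
    Module.Free R M := by
  induction n generalizing M with
  | zero =>
    have := hf.subsingleton
    infer_instance
  | succ n ih =>
    let g : M →ₗ[R] R := proj (Fin.last n) ∘ₗ f
    have : (range g).IsPrincipal :=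
      isPrincipal_of_FG _ (Module.Finite.iff_fg.mp inferInstance)
    have := Ideal.free_of_isPrincipal (range g)
    obtain ⟨e⟩ := g.rangeRestrict.nonempty_linearEquiv_ker_prod g.surjective_rangeRestrict
    have : Module.Finite R (ker g.rangeRestrict) :=
      .of_surjective (fst R _ _ ∘ₗ e.toLinearMap) (Prod.fst_surjective.comp e.surjective)
    have : Module.Free R (ker g.rangeRestrict) := by
      refine ih (funLeft R R Fin.castSucc ∘ₗ f ∘ₗ (ker g.rangeRestrict).subtype) ?_
      rw [← ker_eq_bot, eq_bot_iff]
      rintro ⟨x, hx⟩ hx0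
      have hlast : f x (Fin.last n) = 0 := by simpa [g] using hx
      have hfx : f x = 0 := funext fun k => Fin.lastCases hlast (fun j => congrFun hx0 j) k
      exact (Submodule.mem_bot R).mpr (Subtype.ext (hf (hfx.trans (map_zero f).symm)))
    exact .of_equiv e.symm

theorem free_of_projective {M : Type*} [AddCommGroup M] [Module R M] [Module.Finite R M]
    [Module.Projective R M] : Module.Free R M := by
  obtain ⟨n, f, hf⟩ := Module.Finite.exists_fin' R M
  obtain ⟨s, hs⟩ := f.exists_rightInverse_of_surjective (range_eq_top.mpr hf)
  exact free_of_injective_pi s (Function.LeftInverse.injective (g := f) (LinearMap.congr_fun hs))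

end IsBezout

end

section

variable {α : Type*} [Lattice α] [BoundedOrder α] [IsModularLattice α]

theorem IsCompl.sup_inf_of_le {a a' b : α} (ha : IsCompl a a') (hab : a ≤ b) :
    a ⊔ b ⊓ a' = b := by
  rw [inf_comm, ← sup_inf_assoc_of_le _ hab, ha.sup_eq_top, top_inf_eq]

theorem IsCompl.inf_sup_of_le {a a' b b' : α} (ha : IsCompl a a') (hb : IsCompl b b')
    (hab : a ≤ b) : IsCompl (b ⊓ a') (a ⊔ b') := by
  constructor
  · rw [disjoint_iff, inf_right_comm, inf_comm b, sup_inf_assoc_of_le _ hab, inf_comm b',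
      hb.inf_eq_bot, sup_bot_eq, ha.inf_eq_bot]
  · rw [codisjoint_iff, ← sup_assoc, sup_comm _ a, ha.sup_inf_of_le hab, hb.sup_eq_top]

end

namespace Submodule

variable {R M : Type*} [CommRing R] [AddCommGroup M] [Module R M]

theorem finite_of_isCompl [Module.Finite R M] {p q : Submodule R M} (h : IsCompl p q) :
    Module.Finite R p :=
  .of_surjective _ (projectionOnto_surjective h)

theorem projective_of_isCompl [Module.Projective R M] {p q : Submodule R M} (h : IsCompl p q) :
    Module.Projective R p :=
  .of_split _ _ (projectionOnto_comp_subtype h)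

theorem finrank_sup_of_disjoint [IsDomain R] {s t : Submodule R M} [Module.Finite R s]
    [Module.Finite R t] (h : Disjoint s t) :
    finrank R ↥(s ⊔ t) = finrank R s + finrank R t := by
  have := rank_sup_add_rank_inf_eq s t
  rw [h.eq_bot, rank_bot, add_zero, ← finrank_eq_rank, ← finrank_eq_rank, ← finrank_eq_rank]
    at this
  exact_mod_cast this

theorem exists_eq_sup_span_singleton [IsDomain R] [IsBezout R] [Module.Finite R M]
    [Module.Projective R M] {p p' q q' : Submodule R M} (hp : IsCompl p p') (hq : IsCompl q q')
    (hpq : p ≤ q) (hrank : finrank R q = finrank R p + 1) : ∃ v, q = p ⊔ R ∙ v := by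
  have hQ := hp.inf_sup_of_le hq hpq
  have := finite_of_isCompl hp
  have := finite_of_isCompl hQ
  have := projective_of_isCompl hQ
  have := IsBezout.free_of_projective (R := R) (M := ↥(q ⊓ p'))
  have hQrank : finrank R ↥(q ⊓ p') = 1 := by
    have := finrank_sup_of_disjoint (hp.disjoint.mono_right (inf_le_right (a := q)))
    rw [hp.sup_inf_of_le hpq] at this
    omega
  have hprin : (q ⊓ p').IsPrincipal := by
    rw [← rank_le_one_iff_isPrincipal, ← finrank_eq_rank, hQrank, Nat.cast_one]
  obtain ⟨v, hv⟩ := hprin.principal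
  exact ⟨v, by rw [← hv, hp.sup_inf_of_le hpq]⟩

end Submodule

theorem Submodule.span_image_lt_eq {R M : Type*} [Semiring R] [AddCommMonoid M] [Module R M]
    {m : ℕ} (v : Fin m → M) (F : Fin (m + 1) → Submodule R M) (h0 : F 0 = ⊥)
    (hsucc : ∀ i : Fin m, F i.succ = F i.castSucc ⊔ R ∙ v i) (i : Fin (m + 1)) :
    span R (v '' {j | (j : ℕ) < i}) = F i := by
  induction i using Fin.induction with
  | zero => simp [h0]
  | succ i ih =>
    have : {j : Fin m | (j : ℕ) < i.succ} = {j : Fin m | (j : ℕ) < i.castSucc} ∪ {i} := by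
      ext j
      simp only [Set.mem_ofPred_eq, Set.mem_union, Set.mem_singleton_iff, Fin.val_succ,
        Fin.val_castSucc, Fin.ext_iff]
      omega
    rw [this, Set.image_union, Submodule.span_union, ih, Set.image_singleton, hsucc]

theorem Matrix.exists_GL_col_eq {R : Type*} [CommRing R] {m : ℕ} (v : Fin m → Fin m → R)
    (hv : Submodule.span R (Set.range v) = ⊤) :
    ∃ g : GL (Fin m) R, (g : Matrix (Fin m) (Fin m) R).col = v := by
  let A : Matrix (Fin m) (Fin m) R := (Matrix.of v)ᵀ
  have hA : IsUnit A := by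
    rw [← mulVec_surjective_iff_isUnit, ← coe_mulVecLin, ← LinearMap.range_eq_top,
      range_mulVecLin]
    exact hv
  exact ⟨hA.unit, by rw [hA.unit_spec]; rfl⟩

section

variable {R : Type} [CommRing R] {m : ℕ}

theorem colSpan_apply (g : GL (Fin m) R) (i : Fin (m + 1)) :
    colSpan R m g i =
      Submodule.span R ((g : Matrix (Fin m) (Fin m) R).col '' {j | (j : ℕ) < i}) :=
  rfl

theorem colSpan_mul (g h : GL (Fin m) R) (i : Fin (m + 1)) :
    colSpan R m (g * h) i = (colSpan R m h i).map (g : Matrix (Fin m) (Fin m) R).mulVecLin := by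
  rw [colSpan_apply, colSpan_apply, Submodule.map_span, Set.image_image]
  rfl

theorem colSpan_mul_inj (g : GL (Fin m) R) {h h' : GL (Fin m) R} :
    colSpan R m (g * h) = colSpan R m (g * h') ↔ colSpan R m h = colSpan R m h' := by
  have hinj : Function.Injective (Submodule.map (g : Matrix (Fin m) (Fin m) R).mulVecLin) :=
    Submodule.map_injective_of_injective <| by
      rw [coe_mulVecLin]
      exact mulVec_injective_of_isUnit g.isUnit
  simp only [funext_iff, colSpan_mul, hinj.eq_iff]

theorem mem_colSpan_one_iff {v : Fin m → R} {i : Fin (m + 1)} :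
    v ∈ colSpan R m 1 i ↔ ∀ k : Fin m, (i : ℕ) ≤ k → v k = 0 := by
  have : (1 : Matrix (Fin m) (Fin m) R).col = Pi.basisFun R (Fin m) := by
    ext j k
    simp [Matrix.one_apply, Pi.single_apply]
  rw [colSpan_apply, Units.val_one, this, Module.Basis.mem_span_image]
  simp [Set.subset_def, not_imp_comm]

theorem blockTriangular_iff_colSpan_le (h : GL (Fin m) R) :
    BlockTriangular (h : Matrix (Fin m) (Fin m) R) id ↔
      ∀ i, colSpan R m h i ≤ colSpan R m 1 i := by
  constructor
  · intro hh i
    rw [colSpan_apply, Submodule.span_le]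
    rintro _ ⟨j, hj : (j : ℕ) < i, rfl⟩
    exact mem_colSpan_one_iff.mpr fun k hk => hh (show j < k by omega)
  · intro hle k j hjk
    have hj : (h : Matrix (Fin m) (Fin m) R).col j ∈ colSpan R m h j.succ :=
      Submodule.subset_span ⟨j, by simp, rfl⟩
    exact mem_colSpan_one_iff.mp (hle _ hj) k (by simpa using hjk)

theorem colSpan_one_eq_iff (h : GL (Fin m) R) :
    colSpan R m 1 = colSpan R m h ↔ BlockTriangular (h : Matrix (Fin m) (Fin m) R) id := by
  rw [blockTriangular_iff_colSpan_le]
  refine ⟨fun heq i => heq ▸ le_rfl, fun hle => funext fun i => le_antisymm ?_ (hle i)⟩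
  have hinv : ∀ i, colSpan R m h⁻¹ i ≤ colSpan R m 1 i := by
    rw [← blockTriangular_iff_colSpan_le, coe_units_inv]
    let := h.invertible
    exact blockTriangular_inv_of_blockTriangular ((blockTriangular_iff_colSpan_le h).mpr hle)
  calc colSpan R m 1 i = colSpan R m (h * h⁻¹) i := by rw [mul_inv_cancel]
    _ ≤ colSpan R m (h * 1) i := by
      rw [colSpan_mul, colSpan_mul]
      exact Submodule.map_mono (hinv i)
    _ = colSpan R m h i := by rw [mul_one]

theorem colSpan_eq_iff (g g' : GL (Fin m) R) :
    colSpan R m g = colSpan R m g' ↔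
      BlockTriangular ((g⁻¹ * g' : GL (Fin m) R) : Matrix (Fin m) (Fin m) R) id := by
  calc colSpan R m g = colSpan R m g'
      ↔ colSpan R m (g * 1) = colSpan R m (g * (g⁻¹ * g')) := by
        rw [mul_one, mul_inv_cancel_left]
    _ ↔ colSpan R m 1 = colSpan R m (g⁻¹ * g') := colSpan_mul_inj g
    _ ↔ _ := colSpan_one_eq_iff _

theorem exists_colSpan_eq [IsDomain R] [IsBezout R]
    (F : Fin (m + 1) → Submodule R (Fin m → R))
    (hmono : Monotone F) (h0 : F 0 = ⊥) (htop : F (Fin.last m) = ⊤)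
    (hcompl : ∀ i, ∃ N, IsCompl (F i) N)
    (hrank : ∀ i : Fin (m + 1), Module.finrank R (F i) = (i : ℕ)) :
    ∃ g : GL (Fin m) R, colSpan R m g = F := by
  choose N hN using hcompl
  have hstep : ∀ i : Fin m, ∃ v, F i.succ = F i.castSucc ⊔ R ∙ v := fun i =>
    Submodule.exists_eq_sup_span_singleton (hN i.castSucc) (hN i.succ) (hmono i.castSucc_le_succ)
      (by simp [hrank])
  choose v hv using hstep
  have hspan := Submodule.span_image_lt_eq v F h0 hv
  obtain ⟨g, hg⟩ := Matrix.exists_GL_col_eq v (by simpa [htop] using hspan (Fin.last m))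
  exact ⟨g, funext fun i => by rw [colSpan_apply, hg, hspan]⟩

end

/-- Over a Bézout domain `R`: every finitely generated projective module
is free, the Picard group (class group) of `R` is trivial, and the natural map
`GL_m(R)/B(R) → (GL_m/B)(R)` to the set of full flags of direct summands of `Rᵐ` is
bijective (surjective onto flags, with fibers exactly the right `B(R)`-cosets, `B` the
upper triangular Borel). -/
theorem stmt_5 (R : Type) [CommRing R] [IsDomain R] [IsBezout R] (m : ℕ) :
    (∀ (M : Type) [AddCommGroup M] [Module R M],
        Module.Finite R M → Module.Projective R M → Module.Free R M) ∧
    Subsingleton (ClassGroup R) ∧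
    ((∀ F : Fin (m + 1) → Submodule R (Fin m → R),
        Monotone F → F 0 = ⊥ → F (Fin.last m) = ⊤ →
        (∀ i, ∃ N, IsCompl (F i) N) →
        (∀ i : Fin (m + 1), Module.finrank R (F i) = (i : ℕ)) →
        ∃ g : GL (Fin m) R, colSpan R m g = F) ∧
      (∀ g g' : GL (Fin m) R,
        colSpan R m g = colSpan R m g' ↔
          Matrix.BlockTriangular
            ((((g⁻¹ * g' : GL (Fin m) R)) : Matrix (Fin m) (Fin m) R)) id)) :=
  -- Bézout domains are GCD domains, whose class group is trivial by a Mathlib instance.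
  ⟨fun _ _ _ _ _ => IsBezout.free_of_projective, inferInstance, exists_colSpan_eq,
    colSpan_eq_iff⟩
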